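/- arXiv:1712.01175 — 6 statements merged into one kernel-verified Lean document; each statement's English description precedes it below -/
import Mathlib

section
/- For all real numbers σ and τ, the inequality 6τ⁶ + 4(4σ² + 9)τ⁴ − 2(10σ⁴ + 108σ² + 243)τ² + 7σ⁶ + 126σ⁴ + 729σ² + 1296 > (|σ³ − 2στ² + 9σ| + 2|τ|³)² holds. -/
lemma Spos (q w : ℝ) (hq : 0 < q) :
    0 < 2/9*q^4 - 4*q^3*w + (162+36*q+26*q^2)*w^2 + (108-36*q)*w^3 + 18*w^4 := by
  rcases le_or_gt w 0 with hw | hw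
  · nlinarith [mul_pos (mul_pos hq hq) (mul_pos hq hq),
      mul_nonneg (mul_nonneg (mul_nonneg hq.le hq.le) hq.le) (neg_nonneg.2 hw),
      mul_nonneg (mul_nonneg hq.le (sq_nonneg w)) (neg_nonneg.2 hw),
      sq_nonneg (w*(w+3)), mul_nonneg (mul_nonneg hq.le hq.le) (sq_nonneg w),
      mul_nonneg hq.le (sq_nonneg w)]
  · nlinarith [sq_nonneg (q^2 - 9*q*w + 9*w^2), mul_pos (mul_pos hq hq) (mul_pos hw hw),
      mul_pos hq (mul_pos hw hw), mul_pos (mul_pos hw hw) hw,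
      mul_pos (mul_pos hq hq) (mul_pos hq hq)]

lemma key (x y : ℝ) :
    4*x*y^3*(x^2-2*y^2+9) <
      2*y^6+12*x^2*y^4+36*y^4-16*x^4*y^2-180*x^2*y^2-486*y^2+6*x^6+108*x^4+648*x^2+1296 := by
  rcases eq_or_ne (x+y) 0 with h0 | h0
  · have hx : x = -y := by linarith
    subst hx
    nlinarith [mul_nonneg (sq_nonneg y) (sq_nonneg (2*y^2 - 9))]
  · have hu : 0 < (x+y)^2 := by positivity
    have hS := Spos ((x+y)^2) ((x+y)*y - 3 - (x+y)^2/3) hu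
    by_contra hc
    push_neg at hc
    nlinarith [hS, hu, mul_nonneg (sub_nonneg.2 hc) hu.le]

theorem stmt0 (σ τ : ℝ) :
    (|σ^3 - 2*σ*τ^2 + 9*σ| + 2*|τ|^3)^2 <
      6*τ^6 + 4*(4*σ^2 + 9)*τ^4 - 2*(10*σ^4 + 108*σ^2 + 243)*τ^2
        + 7*σ^6 + 126*σ^4 + 729*σ^2 + 1296 := by
  have k1 := key σ τ
  have k2 := key (-σ) τ
  have habs : 4*|(σ^3 - 2*σ*τ^2 + 9*σ) * τ^3| <
      2*τ^6+12*σ^2*τ^4+36*τ^4-16*σ^4*τ^2-180*σ^2*τ^2-486*τ^2+6*σ^6+108*σ^4+648*σ^2+1296 := by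
    rcases abs_cases ((σ^3 - 2*σ*τ^2 + 9*σ) * τ^3) with ⟨h, _⟩ | ⟨h, _⟩ <;> rw [h] <;>
      nlinarith [k1, k2]
  have e1 : |σ^3 - 2*σ*τ^2 + 9*σ|^2 = (σ^3 - 2*σ*τ^2 + 9*σ)^2 := sq_abs _
  have e2 : (|τ|^3)^2 = (τ^2)^3 := by rw [← sq_abs τ]; ring
  have e3 : |σ^3 - 2*σ*τ^2 + 9*σ| * |τ|^3 = |(σ^3 - 2*σ*τ^2 + 9*σ) * τ^3| := by
    rw [abs_mul, abs_pow]
  nlinarith [habs, e1, e2, e3]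
end

section
/- For all real numbers x, y, z, the inequality −2(xy + yz + zx + 2)³ < (x − y)²(xy + 1)² + (x − z)²(xz + 1)² + (z − y)²(yz + 1)² holds. -/
theorem keylem (x y p : ℝ) (hx : 0 ≤ x) (hy : 0 ≤ y) (hp : 0 ≤ p)
    (hm : 0 < p*(x+y) - x*y - 2) :
    0 < (x - y)^2*(x*y + 1)^2 + (x + p)^2*(1 - x*p)^2 + (y + p)^2*(1 - y*p)^2
        - 2*(p*(x+y) - x*y - 2)^3 := by
  have hT1 := sq_nonneg ((x-y)*(x*y+1))
  have hT2 := sq_nonneg ((x-p)*(x*p-1))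
  have hT3 := sq_nonneg ((y-p)*(y*p-1))
  have hS := sq_nonneg (p*x+p*y-2)
  have hd := sq_nonneg (p*x-p*y)
  have hw : (0:ℝ) ≤ x*y := mul_nonneg hx hy
  have hw3 : (0:ℝ) ≤ (x*y)*((x*y)*(x*y)) := mul_nonneg hw (mul_nonneg hw hw)
  have hmw2 : (0:ℝ) ≤ (p*(x+y)-x*y-2)*((x*y)*(x*y)) := mul_nonneg hm.le (mul_nonneg hw hw)
  have hmd : (0:ℝ) ≤ (p*(x+y)-x*y-2)*(p*x-p*y)^2 := mul_nonneg hm.le (sq_nonneg _)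
  have hwd : (0:ℝ) ≤ (x*y)*(p*x-p*y)^2 := mul_nonneg hw (sq_nonneg _)
  rcases lt_or_ge (p*(x+y) - x*y - 2) (3*(x*y)) with ha | ha
  · have key : 0 < (p*(x+y)-x*y-2)^2 * (3*(x*y) - (p*(x+y)-x*y-2)) :=
      mul_pos (pow_pos hm 2) (by linarith)
    linarith [hT1, hT2, hT3, hS, hd, hw3, hmw2, hmd, hwd, key]
  · rcases lt_or_ge ((p*(x+y)-x*y-2)^2) (3*(p*x-p*y)^2) with hb | hb
    · have hm2w : (0:ℝ) ≤ (p*(x+y)-x*y-2)^2*(x*y) := mul_nonneg (sq_nonneg _) hw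
      have key : 0 < (p*(x+y)-x*y-2)*(3*(p*x-p*y)^2 - (p*(x+y)-x*y-2)^2) :=
        mul_pos hm (by linarith)
      linarith [hT1, hT2, hT3, hS, hd, hw3, hmw2, hm2w, hwd, key]
    · have hg1 : (0:ℝ) ≤ (p*(x+y)-x*y-2) - 3*(x*y) := by linarith
      have hg2 : (0:ℝ) ≤ (p*(x+y)-x*y-2)^2 - 3*(p*x-p*y)^2 := by linarith
      have c01 : (0:ℝ) ≤ y^3*p := (mul_nonneg (pow_nonneg hy 3) hp)
      have c02 : (0:ℝ) ≤ x*y^4*p := (mul_nonneg (mul_nonneg hx (pow_nonneg hy 4)) hp)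
      have c03 : (0:ℝ) ≤ x^2*y*p := (mul_nonneg (mul_nonneg (pow_nonneg hx 2) hy) hp)
      have c04 : (0:ℝ) ≤ x^2*y^2 := (mul_nonneg (pow_nonneg hx 2) (pow_nonneg hy 2))
      have c05 : (0:ℝ) ≤ x^2*y^3*p := (mul_nonneg (mul_nonneg (pow_nonneg hx 2) (pow_nonneg hy 3)) hp)
      have c06 : (0:ℝ) ≤ x^2*y^4 := (mul_nonneg (pow_nonneg hx 2) (pow_nonneg hy 4))
      have c07 : (0:ℝ) ≤ x^3*p := (mul_nonneg (pow_nonneg hx 3) hp)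
      have c08 : (0:ℝ) ≤ x^3*y := (mul_nonneg (pow_nonneg hx 3) hy)
      have c09 : (0:ℝ) ≤ x^3*y^2*p := (mul_nonneg (mul_nonneg (pow_nonneg hx 3) (pow_nonneg hy 2)) hp)
      have c10 : (0:ℝ) ≤ x^3*y^3 := (mul_nonneg (pow_nonneg hx 3) (pow_nonneg hy 3))
      have c11 : (0:ℝ) ≤ x^4*y^2 := (mul_nonneg (pow_nonneg hx 4) (pow_nonneg hy 2))
      have c12 : (0:ℝ) ≤ (p*(x+y)-x*y-2 - 3*(x*y))*(y*p) := mul_nonneg hg1 (mul_nonneg hy hp)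
      have c13 : (0:ℝ) ≤ (p*(x+y)-x*y-2 - 3*(x*y))*(y^2) := mul_nonneg hg1 (pow_nonneg hy 2)
      have c14 : (0:ℝ) ≤ (p*(x+y)-x*y-2 - 3*(x*y))*(x*p) := mul_nonneg hg1 (mul_nonneg hx hp)
      have c15 : (0:ℝ) ≤ (p*(x+y)-x*y-2 - 3*(x*y))*(x*y) := mul_nonneg hg1 (mul_nonneg hx hy)
      have c16 : (0:ℝ) ≤ (p*(x+y)-x*y-2 - 3*(x*y))*(x*y^3) := mul_nonneg hg1 (mul_nonneg hx (pow_nonneg hy 3))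
      have c17 : (0:ℝ) ≤ (p*(x+y)-x*y-2 - 3*(x*y))*(x^2) := mul_nonneg hg1 (pow_nonneg hx 2)
      have c18 : (0:ℝ) ≤ (p*(x+y)-x*y-2 - 3*(x*y))*(x^3*y) := mul_nonneg hg1 (mul_nonneg (pow_nonneg hx 3) hy)
      have c19 : (0:ℝ) ≤ (p*(x+y)-x*y-2 - 3*(x*y))^2 := sq_nonneg _
      have c20 : (0:ℝ) ≤ (1-y*p)^2 := sq_nonneg _
      have c21 : (0:ℝ) ≤ (1-x*p)^2 := sq_nonneg _
      have c22 : (0:ℝ) ≤ (y*p^2-x*p^2)^2 := sq_nonneg _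
      have c23 : (0:ℝ) ≤ (y^2*p-x^2*p)^2 := sq_nonneg _
      have c24 : (0:ℝ) ≤ ((p*(x+y)-x*y-2)^2 - 3*(p*x-p*y)^2)*(y-x)^2 := mul_nonneg hg2 (sq_nonneg _)
      have c25 : (0:ℝ) ≤ (p*(x+y)-x*y-2 - 3*(x*y))*(y*p-x*p)^2 := mul_nonneg hg1 (sq_nonneg _)
      have c26 : (0:ℝ) ≤ (p*(x+y)-x*y-2 - 3*(x*y))^2*(p-y)^2 := mul_nonneg (sq_nonneg _) (sq_nonneg _)
      have c27 : (0:ℝ) ≤ (p*(x+y)-x*y-2 - 3*(x*y))^2*(p-x)^2 := mul_nonneg (sq_nonneg _) (sq_nonneg _)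
      linarith [pow_pos hm 2, c01, c02, c03, c04, c05, c06, c07, c08, c09, c10, c11, c12, c13, c14, c15, c16, c17, c18, c19, c20, c21, c22, c23, c24, c25, c26, c27]

theorem stmt1 (x y z : ℝ) :
    -2*(x*y + y*z + z*x + 2)^3 <
      (x - y)^2*(x*y + 1)^2 + (x - z)^2*(x*z + 1)^2 + (z - y)^2*(y*z + 1)^2 := by
  rcases lt_trichotomy (x*y + y*z + z*x + 2) 0 with hs | hs | hs
  · -- s < 0 : sign analysis + keylem
    rcases le_total 0 x with hx | hx
    · rcases le_total 0 y with hy | hy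
      · rcases le_total 0 z with hz | hz
        · exfalso
          nlinarith [mul_nonneg hx hy, mul_nonneg hy hz, mul_nonneg hz hx]
        · have h := keylem x y (-z) hx hy (by linarith) (by linarith)
          linarith [h]
      · rcases le_total 0 z with hz | hz
        · have h := keylem x z (-y) hx hz (by linarith) (by linarith)
          linarith [h]
        · have h := keylem (-y) (-z) x (by linarith) (by linarith) hx (by linarith)
          linarith [h]
    · rcases le_total 0 y with hy | hy
      · rcases le_total 0 z with hz | hz
        · have h := keylem y z (-x) hy hz (by linarith) (by linarith)
          linarith [h]
        · have h := keylem (-x) (-z) y (by linarith) (by linarith) hy (by linarith)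
          linarith [h]
      · rcases le_total 0 z with hz | hz
        · have h := keylem (-x) (-y) z (by linarith) (by linarith) hz (by linarith)
          linarith [h]
        · exfalso
          nlinarith [mul_nonneg (neg_nonneg.2 hx) (neg_nonneg.2 hy),
            mul_nonneg (neg_nonneg.2 hy) (neg_nonneg.2 hz),
            mul_nonneg (neg_nonneg.2 hz) (neg_nonneg.2 hx)]
  · -- s = 0
    have h0 : -2*(x*y + y*z + z*x + 2)^3 = 0 := by rw [hs]; ring
    rw [h0]
    by_contra hc
    push_neg at hc
    have e1 : (x - y) * (x*y + 1) = 0 := by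
      have h2 : ((x - y) * (x*y + 1))^2 ≤ 0 := by
        nlinarith [sq_nonneg ((x - z)*(x*z + 1)), sq_nonneg ((z - y)*(y*z + 1))]
      exact pow_eq_zero_iff (two_ne_zero) |>.mp (le_antisymm h2 (sq_nonneg _))
    have e2 : (x - z) * (x*z + 1) = 0 := by
      have h2 : ((x - z) * (x*z + 1))^2 ≤ 0 := by
        nlinarith [sq_nonneg ((x - y)*(x*y + 1)), sq_nonneg ((z - y)*(y*z + 1))]
      exact pow_eq_zero_iff (two_ne_zero) |>.mp (le_antisymm h2 (sq_nonneg _))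
    have e3 : (z - y) * (y*z + 1) = 0 := by
      have h2 : ((z - y) * (y*z + 1))^2 ≤ 0 := by
        nlinarith [sq_nonneg ((x - y)*(x*y + 1)), sq_nonneg ((x - z)*(x*z + 1))]
      exact pow_eq_zero_iff (two_ne_zero) |>.mp (le_antisymm h2 (sq_nonneg _))
    rcases mul_eq_zero.mp e1 with h1 | h1
    · have hy' : x = y := by linarith
      subst hy'
      rcases mul_eq_zero.mp e2 with h2 | h2
      · have hz' : x = z := by linarith
        subst hz'
        rcases mul_eq_zero.mp e3 with h3 | h3
        · nlinarith [sq_nonneg x]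
        · nlinarith [sq_nonneg x]
      · rcases mul_eq_zero.mp e3 with h3 | h3
        · have hz' : x = z := by linarith
          subst hz'
          nlinarith [sq_nonneg x]
        · have hx2 : x^2 = 0 := by linarith
          have hx0 : x = 0 := by
            exact pow_eq_zero_iff (two_ne_zero) |>.mp hx2
          rw [hx0] at h2
          norm_num at h2
    · rcases mul_eq_zero.mp e2 with h2 | h2
      · have hz' : x = z := by linarith
        subst hz'
        rcases mul_eq_zero.mp e3 with h3 | h3
        · have hy' : x = y := by linarith
          subst hy'
          nlinarith [sq_nonneg x]
        · have hx2 : x^2 = 0 := by linarith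
          have hx0 : x = 0 := by
            exact pow_eq_zero_iff (two_ne_zero) |>.mp hx2
          rw [hx0] at h1
          norm_num at h1
      · rcases mul_eq_zero.mp e3 with h3 | h3
        · have hz' : y = z := by linarith
          subst hz'
          have hy2 : y^2 = 0 := by linarith
          have hy0 : y = 0 := by
            exact pow_eq_zero_iff (two_ne_zero) |>.mp hy2
          rw [hy0] at h1
          norm_num at h1
        · linarith
  · -- s > 0
    have hR : (0:ℝ) ≤ (x - y)^2*(x*y + 1)^2 + (x - z)^2*(x*z + 1)^2 + (z - y)^2*(y*z + 1)^2 := by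
      positivity
    have h3 : 0 < (x*y + y*z + z*x + 2)^3 := pow_pos hs 3
    linarith
end

section
/- For every real number s with s ≥ 6 and every real number k, one has 16(3s − 10)(k − 1)²(k² + ks + 1)² + 5(4k² + 4ks + s + 4)³ > 0. -/
private lemma auxG (a s : ℝ) (ht : 0 ≤ s - 6) (hu : 0 ≤ 2*a*s - a^2 - s - 4)
    (hw : 0 ≤ 2*a - 1) :
    20*(2*a*s - a^2 - s - 4)^3 < (3*s - 10)*(a+2)^2*((2*a*s - a^2 - s - 4)+s)^2 := by
  linarith [mul_nonneg (mul_nonneg (mul_nonneg ht ht) ht) (sq_nonneg (a-4)),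
    mul_nonneg (mul_nonneg (mul_nonneg ht hu) hu) (sq_nonneg (a-9/2)),
    mul_nonneg (mul_nonneg ht hu) (sq_nonneg (a-2)),
    mul_nonneg (mul_nonneg hu hw) (sq_nonneg (a-3)),
    ht,
    mul_nonneg hu (sq_nonneg (a*s - 2*s)),
    mul_nonneg (mul_nonneg hu hu) (sq_nonneg (a-7/2)),
    sq_nonneg (a-3),
    mul_nonneg (mul_nonneg (mul_nonneg ht ht) ht) (sq_nonneg (a-7/2)),
    mul_nonneg hu (sq_nonneg (a-7/2)),
    sq_nonneg ((2*a*s - a^2 - s - 4) - 15/2*s),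
    mul_nonneg hu (sq_nonneg (a^2 - 9/2*a + 2)),
    sq_nonneg (a-2),
    mul_nonneg ht (sq_nonneg (a^2 - 4*a)),
    mul_nonneg (mul_nonneg ht hw) (sq_nonneg ((2*a*s - a^2 - s - 4) - 15/2*s)),
    mul_nonneg hu (sq_nonneg ((2*a*s - a^2 - s - 4) - 15/2*s)),
    mul_nonneg (mul_nonneg ht hu) (sq_nonneg (a-1)),
    mul_nonneg (mul_nonneg hu hu) (sq_nonneg (a-3)),
    mul_nonneg ht ht,
    mul_nonneg (mul_nonneg ht ht) (sq_nonneg a),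
    mul_nonneg ht (sq_nonneg (a^2 - 14/3*a + 10/9))]

theorem stmt2 (s k : ℝ) (hs : 6 ≤ s) :
    0 < 16*(3*s - 10)*(k - 1)^2*(k^2 + k*s + 1)^2 + 5*(4*k^2 + 4*k*s + s + 4)^3 := by
  rcases le_or_gt 0 (4*k^2 + 4*k*s + s + 4) with hq | hq
  · rcases le_or_gt 0 (k^2 + k*s + 1) with hp | hp
    · have hq6 : (6:ℝ) ≤ 4*k^2 + 4*k*s + s + 4 := by nlinarith
      have h216 : (216:ℝ) ≤ (4*k^2 + 4*k*s + s + 4)^3 := by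
        nlinarith [mul_nonneg (by linarith : (0:ℝ) ≤ 4*k^2 + 4*k*s + s + 4 - 6) (sq_nonneg (4*k^2 + 4*k*s + s + 4 + 3)), hq6]
      nlinarith [mul_nonneg (mul_nonneg (by linarith : (0:ℝ) ≤ 3*s - 10) (sq_nonneg (k-1))) (sq_nonneg (k^2 + k*s + 1)), h216]
    · have hk1 : k - 1 ≠ 0 := by
        intro h
        have hk : k = 1 := by linarith
        rw [hk] at hp; nlinarith
      have hne : (k-1)*(k^2 + k*s + 1) ≠ 0 := mul_ne_zero hk1 (ne_of_lt hp)
      have h1 : 0 < ((k-1)*(k^2 + k*s + 1))^2 := by positivity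
      nlinarith [h1, pow_nonneg hq 3]
  · -- hard case: set a = -2k
    have hu : 0 ≤ 2*(-2*k)*s - (-2*k)^2 - s - 4 := by nlinarith
    have hw : 0 ≤ 2*(-2*k) - 1 := by nlinarith [sq_nonneg (2*k+1)]
    have ht : 0 ≤ s - 6 := by linarith
    have := auxG (-2*k) s ht hu hw
    nlinarith [this]
end

section
/- Let x, y, z be real numbers with elementary symmetric functions σ₁ = x + y + z, σ₃ = xyz, and let τ = sqrt((1/2)[(x−y)² + (x−z)² + (z−y)²]). Then 2τ³ ≥ |3σ₁τ² − σ₁³ + 27σ₃|. -/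
theorem stmt4 (x y z σ₁ σ₃ τ : ℝ)
    (h1 : σ₁ = x + y + z) (h3 : σ₃ = x*y*z)
    (hτ : τ = Real.sqrt ((1/2)*((x - y)^2 + (x - z)^2 + (z - y)^2))) :
    2*τ^3 ≥ |3*σ₁*τ^2 - σ₁^3 + 27*σ₃| := by
  have hτ0 : 0 ≤ τ := hτ ▸ Real.sqrt_nonneg _
  have hs : τ^2 = (1/2)*((x - y)^2 + (x - z)^2 + (z - y)^2) := by
    rw [hτ, Real.sq_sqrt (by positivity)]
  have key : (3*σ₁*τ^2 - σ₁^3 + 27*σ₃)^2 ≤ (2*τ^3)^2 := by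
    have e : (2*τ^3)^2 = (3*σ₁*τ^2 - σ₁^3 + 27*σ₃)^2 + 27*((x-y)*(y-z)*(z-x))^2 := by
      have h6 : (2*τ^3)^2 = 4*(τ^2)^3 := by ring
      rw [h6, hs, h1, h3]; ring
    nlinarith [sq_nonneg ((x-y)*(y-z)*(z-x)), e]
  have h2 : 0 ≤ 2*τ^3 := by positivity
  rw [ge_iff_le, abs_le]
  constructor <;> nlinarith [key, h2]
end

section
/- The system of polynomial equations x³y − 4x²y² + 2x² − 2xy³ − 9xy − 2y² − 4 = 0 and x⁴ − 4x³y − 2x²y² − 3x² − 6xy − 4 = 0 has no real solutions (x, y). -/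
theorem stmt7 :
    ¬ ∃ x y : ℝ,
      x^3*y - 4*x^2*y^2 + 2*x^2 - 2*x*y^3 - 9*x*y - 2*y^2 - 4 = 0 ∧
      x^4 - 4*x^3*y - 2*x^2*y^2 - 3*x^2 - 6*x*y - 4 = 0 := by
  rintro ⟨x, y, h1, h2⟩
  have key : 720*y^4 + 1296*y^2 + 576 = 0 := by
    linear_combination
      (-48 + 624*y^2 + 864*y^4 + 480*y^6
        + x*(84*y + 180*y^3 + 192*y^5 + 240*y^7)
        + x^2*(48 + 528*y^2 + 744*y^4 + 480*y^6)
        + x^3*(-108*y - 156*y^3 - 120*y^5)) * h1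
      + (-96 - 924*y^2 - 1356*y^4 - 912*y^6 - 240*y^8
        + x*(168*y - 216*y^3 - 504*y^5 - 480*y^7)
        + x^2*(108*y^2 + 156*y^4 + 120*y^6)) * h2
  nlinarith [sq_nonneg y, sq_nonneg (y^2)]
end

section
/- For all real numbers x, y, z with x + y + z = 0, the inequality −2(xy + yz + zx + 2)³ < (x − y)²(xy + 1)² + (x − z)²(xz + 1)² + (z − y)²(yz + 1)² holds; equivalently, using xy + yz + zx = −(x² + y² + z²)/2, one has (1/4)(x² + y² + z² − 4)³ < (x − y)²(xy + 1)² + (x − z)²(xz + 1)² + (z − y)²(yz + 1)². -/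
theorem stmt19 (x y z : ℝ) (h : x + y + z = 0) :
    -2*(x*y + y*z + z*x + 2)^3 <
      (x - y)^2*(x*y + 1)^2 + (x - z)^2*(x*z + 1)^2 + (z - y)^2*(y*z + 1)^2 ∧
    (1/4)*(x^2 + y^2 + z^2 - 4)^3 <
      (x - y)^2*(x*y + 1)^2 + (x - z)^2*(x*z + 1)^2 + (z - y)^2*(y*z + 1)^2 := by
  have hz : z = -x - y := by linarith
  subst hz
  obtain ⟨u, hu⟩ : ∃ u : ℝ, u = x^2 + x*y + y^2 := ⟨_, rfl⟩
  obtain ⟨v, hv⟩ : ∃ v : ℝ, v = x*y*(x+y) := ⟨_, rfl⟩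
  have hu0 : 0 ≤ u := by nlinarith [sq_nonneg (x+y), sq_nonneg x, sq_nonneg y]
  have hdisc : 27*v^2 ≤ 4*u^3 := by
    rw [hu, hv]; nlinarith [sq_nonneg ((x-y)*(2*y+x)*(2*x+y))]
  have hcubic : 0 < 2*u^3 + 12*u^2 - 54*u + 48 := by
    nlinarith [mul_nonneg hu0 (sq_nonneg (5*u - 8)), sq_nonneg (5*u - 8), sq_nonneg u]
  have key : 0 < 16 - 18*u + 4*u^2 + 2*u^3 - 9*v^2 := by nlinarith
  rw [hu, hv] at key
  constructor <;> nlinarith [key]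
end
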